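/- Let G be a finite graph with vertex set V, and let c > 0 be such that for every vertex v ∈ V and every integer k ≥ 1, the number of connected subsets of V of cardinality k containing v is at most e^{ck}. For every ε > 0 there exists η > 0 (depending only on ε and c) with the following property: whenever w : 𝖯(G) → ℂ is an activity function on the polymers of G satisfying |w(γ)| ≤ η·e^{−(2+c)|γ|} for every polymer γ, then Ξ(w) ≠ 0 and for every independent family {γ̄} of polymers, e^{−ε|Tr({γ̄})|} ≤ |Ξ(w^{{γ̄}}) / Ξ(w)| ≤ e^{ε|Tr({γ̄})|}. -/

import Mathlib

/-!
Write `Ξ_S` for the partition function of the polymers contained in `S` and `N[γ]` for the closed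
neighbourhood of `γ`. Sorting families by the polymer through a vertex `v` gives
`Ξ_S = Ξ_{S∖v} + ∑_{γ ∋ v} w(γ) Ξ_{S∖N[γ]}`. By strong induction on `S` this yields
`‖Ξ_S - Ξ_{S∖v}‖ ≤ η ‖Ξ_{S∖v}‖`: removing one vertex changes `‖Ξ‖` by a factor in `[e^{-δ}, e^δ]`,
so `‖Ξ_{S∖N[γ]}‖ ≤ e^{δ |N[γ]|} ‖Ξ_{S∖v}‖`, and the Kotecký–Preiss type sum
`∑_{γ ∋ v} ‖w(γ)‖ e^{δ |N[γ]|}` is at most `η` because `|N[γ]| ≤ (1 + e^{2c}) |γ|` (the count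
for `k = 2` bounds the degrees) and there are at most `e^{ck}` polymers of size `k` through `v`.
Removing the vertices of `Tr({γ̄})` one at a time gives the ratio bounds.
-/

open Finset
open scoped Classical

variable {V : Type}

/-- A polymer: a nonempty subset of vertices inducing a connected subgraph. -/
def IsPolymer (G : SimpleGraph V) (γ : Finset V) : Prop :=
  γ.Nonempty ∧ (G.induce (↑γ : Set V)).Connected

/-- An independent family of polymers: a finite set of polymers such that the union of
any two distinct members does not induce a connected subgraph. -/
def IsIndepFamily [DecidableEq V] (G : SimpleGraph V) (Γ : Finset (Finset V)) : Prop :=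
  (∀ γ ∈ Γ, IsPolymer G γ) ∧
    ∀ γ ∈ Γ, ∀ γ' ∈ Γ, γ ≠ γ' → ¬ (G.induce (↑(γ ∪ γ') : Set V)).Connected

/-- The trace of a family of polymers: the union of its members. -/
def traceFam [DecidableEq V] (Γ : Finset (Finset V)) : Finset V := Γ.sup id

/-- The polymer partition function `Ξ(w)` with activities `w` (the empty family
contributes `1`). -/
noncomputable def Xi [Fintype V] [DecidableEq V] (G : SimpleGraph V)
    (w : Finset V → ℂ) : ℂ :=
  ∑ Γ : Finset (Finset V), if IsIndepFamily G Γ then ∏ γ ∈ Γ, w γ else 0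

open Real

lemma SimpleGraph.not_connected_induce_union {α : Type*} (G : SimpleGraph α) {s t : Set α}
    (hs : s.Nonempty) (ht : t.Nonempty) (hst : Disjoint s t)
    (hadj : ∀ x ∈ s, ∀ y ∈ t, ¬G.Adj x y) : ¬(G.induce (s ∪ t)).Connected := by
  intro hconn
  obtain ⟨x, hx⟩ := hs
  obtain ⟨y, hy⟩ := ht
  obtain ⟨p⟩ := hconn.preconnected ⟨x, Or.inl hx⟩ ⟨y, Or.inr hy⟩
  obtain ⟨d, -, hd₁, hd₂⟩ :=
    p.exists_boundary_dart {z | (z : α) ∈ s} hx (Set.disjoint_right.1 hst hy)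
  exact hadj _ hd₁ _ (d.snd.2.resolve_left hd₂) d.adj

lemma IsIndepFamily.subset [DecidableEq V] {G : SimpleGraph V} {Γ Γ' : Finset (Finset V)}
    (h : IsIndepFamily G Γ) (hsub : Γ' ⊆ Γ) : IsIndepFamily G Γ' :=
  ⟨fun γ hγ => h.1 γ (hsub hγ), fun γ hγ γ' hγ' => h.2 γ (hsub hγ) γ' (hsub hγ')⟩

noncomputable def polymersThrough (G : SimpleGraph V) (S : Finset V) (v : V) : Finset (Finset V) :=
  {γ ∈ S.powerset | IsPolymer G γ ∧ v ∈ γ}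

@[simp]
lemma mem_polymersThrough {G : SimpleGraph V} {S γ : Finset V} {v : V} :
    γ ∈ polymersThrough G S v ↔ γ ⊆ S ∧ IsPolymer G γ ∧ v ∈ γ := by
  simp [polymersThrough]

section Polymers

variable [Fintype V] [DecidableEq V] {G : SimpleGraph V}

variable (G) in
noncomputable def closedNbhd (γ : Finset V) : Finset V :=
  γ.biUnion fun x => insert x (G.neighborFinset x)

lemma mem_closedNbhd {γ : Finset V} {u : V} :
    u ∈ closedNbhd G γ ↔ ∃ x ∈ γ, u = x ∨ G.Adj x u := by
  simp [closedNbhd]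

lemma subset_closedNbhd (γ : Finset V) : γ ⊆ closedNbhd G γ :=
  fun x hx => mem_closedNbhd.2 ⟨x, hx, Or.inl rfl⟩

lemma IsPolymer.connected_union_iff {γ γ' : Finset V} (hγ : IsPolymer G γ)
    (hγ' : IsPolymer G γ') :
    (G.induce (↑(γ ∪ γ') : Set V)).Connected ↔ ¬Disjoint γ' (closedNbhd G γ) := by
  rw [coe_union]
  constructor
  · intro hconn hdisj
    refine G.not_connected_induce_union (coe_nonempty.2 hγ.1) (coe_nonempty.2 hγ'.1) ?_ ?_ hconn
    · exact disjoint_coe.2 (hdisj.mono_right (subset_closedNbhd γ)).symm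
    · exact fun x hx y hy hxy => disjoint_left.1 hdisj hy (mem_closedNbhd.2 ⟨x, hx, Or.inr hxy⟩)
  · intro h
    obtain ⟨u, hu', hu⟩ := not_disjoint_iff.1 h
    obtain ⟨x, hx, rfl | hxu⟩ := mem_closedNbhd.1 hu
    · exact SimpleGraph.induce_union_connected hγ.2.preconnected hγ'.2.preconnected ⟨u, hx, hu'⟩
    · exact SimpleGraph.connected_induce_union hγ.2.preconnected hγ'.2.preconnected hx hu' hxu

lemma IsIndepFamily.disjoint_closedNbhd {Γ : Finset (Finset V)} (h : IsIndepFamily G Γ)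
    {γ γ' : Finset V} (hγ : γ ∈ Γ) (hγ' : γ' ∈ Γ) (hne : γ ≠ γ') :
    Disjoint γ' (closedNbhd G γ) := by
  by_contra hmeet
  exact h.2 γ hγ γ' hγ' hne (((h.1 γ hγ).connected_union_iff (h.1 γ' hγ')).2 hmeet)

lemma IsIndepFamily.eq_of_mem_of_mem {Γ : Finset (Finset V)} (h : IsIndepFamily G Γ)
    {γ γ' : Finset V} (hγ : γ ∈ Γ) (hγ' : γ' ∈ Γ) {v : V} (hv : v ∈ γ) (hv' : v ∈ γ') :
    γ = γ' := by
  by_contra hne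
  exact disjoint_left.1 (h.disjoint_closedNbhd hγ hγ' hne) hv' (subset_closedNbhd γ hv)

lemma IsIndepFamily.insert {Γ : Finset (Finset V)} (h : IsIndepFamily G Γ) {γ : Finset V}
    (hγ : IsPolymer G γ) (hdisj : ∀ γ' ∈ Γ, Disjoint γ' (closedNbhd G γ)) :
    IsIndepFamily G (insert γ Γ) := by
  refine ⟨fun γ' hγ' => ?_, fun γ₁ hmem₁ γ₂ hmem₂ hne => ?_⟩
  · obtain rfl | hγ' := mem_insert.1 hγ'
    exacts [hγ, h.1 γ' hγ']
  rcases mem_insert.1 hmem₁ with rfl | hγ₁ <;> rcases mem_insert.1 hmem₂ with rfl | hγ₂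
  · exact absurd rfl hne
  · exact fun hconn => (hγ.connected_union_iff (h.1 γ₂ hγ₂)).1 hconn (hdisj γ₂ hγ₂)
  · rw [union_comm]
    exact fun hconn => (hγ.connected_union_iff (h.1 γ₁ hγ₁)).1 hconn (hdisj γ₁ hγ₁)
  · exact h.2 γ₁ hγ₁ γ₂ hγ₂ hne

lemma IsIndepFamily.card_filter_mem_le_one {Γ : Finset (Finset V)} (h : IsIndepFamily G Γ)
    (v : V) : #{γ ∈ Γ | v ∈ γ} ≤ 1 :=
  card_le_one.2 fun _ hγ _ hγ' =>
    h.eq_of_mem_of_mem (mem_filter.1 hγ).1 (mem_filter.1 hγ').1 (mem_filter.1 hγ).2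
      (mem_filter.1 hγ').2

variable (G) in
lemma degree_le_card_polymers (x : V) :
    G.degree x ≤ Nat.card {γ : Finset V // IsPolymer G γ ∧ #γ = 2 ∧ x ∈ γ} := by
  rw [← SimpleGraph.card_neighborSet_eq_degree, ← Nat.card_eq_fintype_card]
  refine Nat.card_le_card_of_injective (fun u => ⟨{x, u.1}, ⟨insert_nonempty _ _, ?_⟩,
    card_pair (G.ne_of_adj u.2), mem_insert_self _ _⟩) fun u u' huu' => ?_
  · rw [coe_pair]
    exact SimpleGraph.induce_pair_connected_of_adj u.2
  · have hpair : ({x, u.1} : Finset V) = {x, u'.1} := congrArg Subtype.val huu'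
    have hu : u.1 ∈ ({x, u'.1} : Finset V) := hpair ▸ mem_insert_of_mem (mem_singleton_self _)
    obtain hux | huu' := mem_insert.1 hu
    · exact absurd hux (G.ne_of_adj u.2).symm
    · exact Subtype.ext (mem_singleton.1 huu')

lemma card_closedNbhd_le {D : ℝ} (hdeg : ∀ x, (G.degree x : ℝ) ≤ D) (γ : Finset V) :
    (#(closedNbhd G γ) : ℝ) ≤ (1 + D) * #γ := by
  calc (#(closedNbhd G γ) : ℝ) ≤ ∑ x ∈ γ, (#(insert x (G.neighborFinset x)) : ℝ) := by
        exact_mod_cast card_biUnion_le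
    _ ≤ ∑ _x ∈ γ, (1 + D) := by
        refine sum_le_sum fun x _ => ?_
        have hins : (#(insert x (G.neighborFinset x)) : ℝ) ≤ G.degree x + 1 := by
          exact_mod_cast card_insert_le x (G.neighborFinset x)
        linarith [hdeg x]
    _ = (1 + D) * #γ := by rw [sum_const, nsmul_eq_mul, mul_comm]

end Polymers

section Restricted

variable [Fintype V] [DecidableEq V] (G : SimpleGraph V) (w : Finset V → ℂ)

noncomputable def indepFamiliesIn (S : Finset V) : Finset (Finset (Finset V)) :=
  {Γ | IsIndepFamily G Γ ∧ ∀ γ ∈ Γ, γ ⊆ S}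

noncomputable def XiOn (S : Finset V) : ℂ :=
  ∑ Γ ∈ indepFamiliesIn G S, ∏ γ ∈ Γ, w γ

variable {G}

@[simp]
lemma mem_indepFamiliesIn {S : Finset V} {Γ : Finset (Finset V)} :
    Γ ∈ indepFamiliesIn G S ↔ IsIndepFamily G Γ ∧ ∀ γ ∈ Γ, γ ⊆ S := by
  simp [indepFamiliesIn]

lemma indepFamiliesIn_empty : indepFamiliesIn G ∅ = {∅} := by
  ext Γ
  simp only [mem_indepFamiliesIn, subset_empty, mem_singleton]
  constructor
  · rintro ⟨h, hempty⟩
    exact eq_empty_of_forall_notMem fun γ hγ => (h.1 γ hγ).1.ne_empty (hempty γ hγ)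
  · rintro rfl
    simp [IsIndepFamily]

variable (G)

lemma XiOn_empty : XiOn G w ∅ = 1 := by
  simp [XiOn, indepFamiliesIn_empty]

lemma Xi_eq_XiOn_univ : Xi G w = XiOn G w univ := by
  simp [Xi, XiOn, indepFamiliesIn, sum_filter]

lemma Xi_restrict_eq_XiOn_sdiff (T : Finset V) :
    Xi G (fun γ => if γ ∩ T = ∅ then w γ else 0) = XiOn G w (univ \ T) := by
  simp only [Xi, XiOn, indepFamiliesIn, sum_filter, prod_ite_zero, subset_sdiff,
    disjoint_iff_inter_eq_empty, ite_and, subset_univ, true_and]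
  -- the two sides now differ only in the `Decidable` instances of the inner `if`
  congr! 4

variable {G}

lemma filter_indepFamiliesIn_forall_notMem (S : Finset V) (v : V) :
    {Γ ∈ indepFamiliesIn G S | ∀ γ ∈ Γ, v ∉ γ} = indepFamiliesIn G (S.erase v) := by
  ext Γ
  simp only [mem_filter, mem_indepFamiliesIn, subset_erase]
  grind

lemma sum_filter_mem_indepFamiliesIn {S γ : Finset V} (hγ : IsPolymer G γ) (hγS : γ ⊆ S) :
    ∑ Γ ∈ indepFamiliesIn G S with γ ∈ Γ, ∏ γ' ∈ Γ, w γ' =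
      w γ * XiOn G w (S \ closedNbhd G γ) := by
  rw [XiOn, mul_sum]
  refine sum_nbij' (fun Γ => Γ.erase γ) (insert γ) ?_ ?_ ?_ ?_ ?_
  · intro Γ hΓ
    simp only [mem_filter, mem_indepFamiliesIn] at hΓ
    obtain ⟨⟨hind, hsub⟩, hγΓ⟩ := hΓ
    refine mem_indepFamiliesIn.2 ⟨hind.subset (erase_subset _ _), fun γ' hγ' => ?_⟩
    obtain ⟨hne, hγ'Γ⟩ := mem_erase.1 hγ'
    exact subset_sdiff.2 ⟨hsub γ' hγ'Γ, hind.disjoint_closedNbhd hγΓ hγ'Γ (Ne.symm hne)⟩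
  · intro Γ hΓ
    obtain ⟨hind, hsub⟩ := mem_indepFamiliesIn.1 hΓ
    refine mem_filter.2 ⟨mem_indepFamiliesIn.2 ⟨hind.insert hγ fun γ' hγ' =>
      (subset_sdiff.1 (hsub γ' hγ')).2, fun γ' hγ' => ?_⟩, mem_insert_self _ _⟩
    obtain rfl | hγ' := mem_insert.1 hγ'
    exacts [hγS, (hsub γ' hγ').trans sdiff_subset]
  · intro Γ hΓ
    exact insert_erase (mem_filter.1 hΓ).2
  · intro Γ hΓ
    refine erase_insert fun hγΓ => ?_
    obtain ⟨x, hx⟩ := hγ.1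
    exact (mem_sdiff.1 ((mem_indepFamiliesIn.1 hΓ).2 γ hγΓ hx)).2 (subset_closedNbhd γ hx)
  · intro Γ hΓ
    exact (mul_prod_erase Γ w (mem_filter.1 hΓ).2).symm

variable (G)

lemma XiOn_eq_XiOn_erase_add (S : Finset V) (v : V) :
    XiOn G w S = XiOn G w (S.erase v) +
      ∑ γ ∈ polymersThrough G S v, w γ * XiOn G w (S \ closedNbhd G γ) := by
  have hsplit : ∀ Γ ∈ indepFamiliesIn G S, ∏ γ ∈ Γ, w γ =
      (if ∀ γ ∈ Γ, v ∉ γ then ∏ γ ∈ Γ, w γ else 0) + ∑ γ ∈ Γ with v ∈ γ, ∏ γ' ∈ Γ, w γ' := by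
    intro Γ hΓ
    rw [sum_const]
    split_ifs with hv
    · rw [filter_false_of_mem hv, card_empty, zero_smul, add_zero]
    · obtain ⟨γ, hγΓ, hvγ⟩ : ∃ γ ∈ Γ, v ∈ γ := by simpa using hv
      have hone : #{γ ∈ Γ | v ∈ γ} = 1 :=
        le_antisymm ((mem_indepFamiliesIn.1 hΓ).1.card_filter_mem_le_one v)
          (card_pos.2 ⟨γ, mem_filter.2 ⟨hγΓ, hvγ⟩⟩)
      rw [hone, one_smul, zero_add]
  rw [XiOn, sum_congr rfl hsplit, sum_add_distrib, ← sum_filter,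
    filter_indepFamiliesIn_forall_notMem, ← XiOn]
  congr 1
  rw [sum_comm' (t' := polymersThrough G S v)
    (s' := fun γ => {Γ ∈ indepFamiliesIn G S | γ ∈ Γ})]
  · refine sum_congr rfl fun γ hγ => ?_
    obtain ⟨hγS, hγ, -⟩ := mem_polymersThrough.1 hγ
    exact sum_filter_mem_indepFamiliesIn w hγ hγS
  · intro Γ γ
    simp only [mem_filter, mem_polymersThrough, mem_indepFamiliesIn]
    constructor
    · rintro ⟨⟨hind, hsub⟩, hγΓ, hvγ⟩
      exact ⟨⟨⟨hind, hsub⟩, hγΓ⟩, hsub γ hγΓ, hind.1 γ hγΓ, hvγ⟩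
    · rintro ⟨⟨hΓ, hγΓ⟩, -, -, hvγ⟩
      exact ⟨hΓ, hγΓ, hvγ⟩

end Restricted

section Perturbation

variable {E : Type*} [SeminormedAddCommGroup E] {a b : E} {δ η : ℝ}

lemma norm_right_le_exp_mul_of_norm_sub_le (h : ‖a - b‖ ≤ η * ‖b‖)
    (hη : exp (-δ) ≤ 1 - η) : ‖b‖ ≤ exp δ * ‖a‖ := by
  have hlow : exp (-δ) * ‖b‖ ≤ ‖a‖ := by
    nlinarith [norm_sub_norm_le b a, norm_sub_rev a b, norm_nonneg b]
  calc ‖b‖ = exp δ * (exp (-δ) * ‖b‖) := by rw [← mul_assoc, ← exp_add]; simp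
    _ ≤ exp δ * ‖a‖ := by gcongr

lemma norm_left_le_exp_mul_of_norm_sub_le (h : ‖a - b‖ ≤ η * ‖b‖)
    (hη : 1 + η ≤ exp δ) : ‖a‖ ≤ exp δ * ‖b‖ := by
  nlinarith [norm_sub_norm_le a b, norm_nonneg b]

end Perturbation

section Telescoping

variable {α : Type*} [DecidableEq α] {f : Finset α → ℝ} {C : ℝ} {S : Finset α}

lemma le_pow_card_mul_of_erase_le (hC : 0 ≤ C) (h : ∀ A ⊆ S, ∀ u, f (A.erase u) ≤ C * f A)
    (T : Finset α) : f (S \ T) ≤ C ^ #T * f S := by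
  induction T using Finset.induction_on with
  | empty => simp
  | insert u T huT ih =>
    rw [sdiff_insert, card_insert_of_notMem huT, pow_succ', mul_assoc]
    exact (h _ sdiff_subset u).trans (mul_le_mul_of_nonneg_left ih hC)

lemma le_pow_card_mul_of_le_erase (hC : 0 ≤ C) (h : ∀ A ⊆ S, ∀ u, f A ≤ C * f (A.erase u))
    (T : Finset α) : f S ≤ C ^ #T * f (S \ T) := by
  induction T using Finset.induction_on with
  | empty => simp
  | insert u T huT ih =>
    rw [sdiff_insert, card_insert_of_notMem huT, pow_succ, mul_assoc]
    exact ih.trans (mul_le_mul_of_nonneg_left (h _ sdiff_subset u) (pow_nonneg hC _))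

end Telescoping

section Expansion

variable [Fintype V] [DecidableEq V] {G : SimpleGraph V} {w : Finset V → ℂ} {δ η : ℝ}

lemma norm_XiOn_sub_XiOn_erase_le (hη : exp (-δ) ≤ 1 - η)
    (hKP : ∀ S v, ∑ γ ∈ polymersThrough G S v, ‖w γ‖ * exp (δ * #(closedNbhd G γ)) ≤ η)
    (S : Finset V) (v : V) :
    ‖XiOn G w S - XiOn G w (S.erase v)‖ ≤ η * ‖XiOn G w (S.erase v)‖ := by
  induction S using Finset.strongInduction generalizing v with
  | H S ih =>
  have hterm : ∀ γ ∈ polymersThrough G S v, ‖XiOn G w (S \ closedNbhd G γ)‖ ≤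
      exp (δ * #(closedNbhd G γ)) * ‖XiOn G w (S.erase v)‖ := by
    intro γ hγ
    obtain ⟨hγS, -, hvγ⟩ := mem_polymersThrough.1 hγ
    have hvN : v ∈ closedNbhd G γ := subset_closedNbhd γ hvγ
    have hsdiff : S.erase v \ closedNbhd G γ = S \ closedNbhd G γ := by
      rw [erase_sdiff_comm, erase_eq_of_notMem fun h => (mem_sdiff.1 h).2 hvN]
    rw [← hsdiff, mul_comm δ, exp_nat_mul]
    refine le_pow_card_mul_of_erase_le (f := fun A => ‖XiOn G w A‖) (S := S.erase v)
      (exp_pos δ).le (fun A hA u => ?_) _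
    exact norm_right_le_exp_mul_of_norm_sub_le
      (ih A ((hA.trans_ssubset (erase_ssubset (hγS hvγ)))) u) hη
  calc ‖XiOn G w S - XiOn G w (S.erase v)‖
      = ‖∑ γ ∈ polymersThrough G S v, w γ * XiOn G w (S \ closedNbhd G γ)‖ := by
        rw [XiOn_eq_XiOn_erase_add G w S v, add_sub_cancel_left]
    _ ≤ ∑ γ ∈ polymersThrough G S v, ‖w γ‖ * ‖XiOn G w (S \ closedNbhd G γ)‖ :=
        norm_sum_le_of_le _ fun γ _ => norm_mul_le _ _
    _ ≤ ∑ γ ∈ polymersThrough G S v,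
          ‖w γ‖ * (exp (δ * #(closedNbhd G γ)) * ‖XiOn G w (S.erase v)‖) := by
        gcongr with γ hγ
        exact hterm γ hγ
    _ = (∑ γ ∈ polymersThrough G S v, ‖w γ‖ * exp (δ * #(closedNbhd G γ))) *
          ‖XiOn G w (S.erase v)‖ := by
        rw [sum_mul]
        simp_rw [mul_assoc]
    _ ≤ η * ‖XiOn G w (S.erase v)‖ := by
        gcongr
        exact hKP S v

variable (hstep : ∀ S v, ‖XiOn G w S - XiOn G w (S.erase v)‖ ≤ η * ‖XiOn G w (S.erase v)‖)
include hstep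

lemma XiOn_ne_zero (hη : η < 1) (S : Finset V) : XiOn G w S ≠ 0 := by
  induction S using Finset.induction_on with
  | empty => rw [XiOn_empty]; exact one_ne_zero
  | insert v S hv ih =>
    intro hzero
    have hS := hstep (insert v S) v
    rw [hzero, erase_insert hv, zero_sub, norm_neg] at hS
    exact ih (norm_le_zero_iff.1 (by nlinarith [norm_nonneg (XiOn G w S)]))

lemma XiOn_sdiff_div_bounds (hη₁ : 1 + η ≤ exp δ) (hη₂ : exp (-δ) ≤ 1 - η)
    (S T : Finset V) :
    exp (-δ * #T) ≤ ‖XiOn G w (S \ T) / XiOn G w S‖ ∧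
      ‖XiOn G w (S \ T) / XiOn G w S‖ ≤ exp (δ * #T) := by
  have hS : 0 < ‖XiOn G w S‖ :=
    norm_pos_iff.2 (XiOn_ne_zero hstep (by linarith [exp_pos (-δ)]) S)
  have hup := le_pow_card_mul_of_erase_le (f := fun A => ‖XiOn G w A‖) (S := S) (exp_pos δ).le
    (fun A _ u => norm_right_le_exp_mul_of_norm_sub_le (hstep A u) hη₂) T
  have hlow := le_pow_card_mul_of_le_erase (f := fun A => ‖XiOn G w A‖) (S := S) (exp_pos δ).le
    (fun A _ u => norm_left_le_exp_mul_of_norm_sub_le (hstep A u) hη₁) T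
  rw [← exp_nat_mul, mul_comm (#T : ℝ)] at hup hlow
  rw [norm_div, le_div_iff₀ hS, div_le_iff₀ hS, neg_mul, exp_neg, inv_mul_le_iff₀ (exp_pos _)]
  exact ⟨hlow, hup⟩

end Expansion

lemma sum_exp_neg_le_one {s : Finset ℕ} (hs : ∀ k ∈ s, 1 ≤ k) : ∑ k ∈ s, exp (-(k : ℝ)) ≤ 1 := by
  obtain ⟨N, hN⟩ := exists_nat_subset_range s
  have hsub : s ⊆ Ico 1 N := fun k hk => mem_Ico.2 ⟨hs k hk, mem_range.1 (hN hk)⟩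
  have hexp : exp (-1) * exp 1 = 1 := by rw [← exp_add]; simp
  have htwo : 2 ≤ exp 1 := by linarith [add_one_le_exp 1]
  have hlt : exp (-1) < 1 := Real.exp_lt_one_iff.2 (by norm_num)
  calc ∑ k ∈ s, exp (-(k : ℝ)) = ∑ k ∈ s, exp (-1) ^ k := by
        simp_rw [← exp_nat_mul, mul_neg_one]
    _ ≤ ∑ k ∈ Ico 1 N, exp (-1) ^ k :=
        sum_le_sum_of_subset_of_nonneg hsub fun _ _ _ => by positivity
    _ ≤ exp (-1) ^ 1 / (1 - exp (-1)) := geom_sum_Ico_le_of_lt_one (exp_pos _).le hlt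
    _ ≤ 1 := by
        rw [pow_one, div_le_one (by linarith)]
        nlinarith

section ActivityBound

variable [Fintype V] [DecidableEq V] {G : SimpleGraph V} {w : Finset V → ℂ} {c δ η D : ℝ}

lemma card_polymersThrough_filter_card_eq_le
    (hcount : ∀ v : V, ∀ k : ℕ, 1 ≤ k →
      (Nat.card {γ : Finset V // IsPolymer G γ ∧ γ.card = k ∧ v ∈ γ} : ℝ) ≤ exp (c * k))
    (S : Finset V) (v : V) {k : ℕ} (hk : 1 ≤ k) :
    (#{γ ∈ polymersThrough G S v | #γ = k} : ℝ) ≤ exp (c * k) := by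
  refine le_trans ?_ (hcount v k hk)
  rw [Nat.card_eq_fintype_card, Fintype.card_subtype, Nat.cast_le]
  refine card_le_card fun γ hγ => ?_
  simp only [mem_filter, mem_polymersThrough] at hγ
  simp [hγ]

lemma norm_mul_exp_card_closedNbhd_le (hdeg : ∀ x, (G.degree x : ℝ) ≤ D)
    (hw : ∀ γ : Finset V, IsPolymer G γ → ‖w γ‖ ≤ η * exp (-(2 + c) * γ.card))
    (hδ : 0 ≤ δ) (hδD : δ * (1 + D) ≤ 1) {γ : Finset V} (hγ : IsPolymer G γ) :
    ‖w γ‖ * exp (δ * #(closedNbhd G γ)) ≤ η * exp (-(1 + c) * #γ) := by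
  have hN : δ * #(closedNbhd G γ) ≤ #γ :=
    calc δ * #(closedNbhd G γ) ≤ δ * ((1 + D) * #γ) := by
          gcongr
          exact card_closedNbhd_le hdeg γ
      _ ≤ #γ := by rw [← mul_assoc]; exact mul_le_of_le_one_left (by positivity) hδD
  calc ‖w γ‖ * exp (δ * #(closedNbhd G γ)) ≤ η * exp (-(2 + c) * #γ) * exp #γ :=
        mul_le_mul (hw γ hγ) (exp_le_exp.2 hN) (exp_pos _).le ((norm_nonneg _).trans (hw γ hγ))
    _ = η * exp (-(1 + c) * #γ) := by rw [mul_assoc, ← exp_add]; ring_nf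

lemma sum_polymersThrough_norm_mul_exp_le
    (hcount : ∀ v : V, ∀ k : ℕ, 1 ≤ k →
      (Nat.card {γ : Finset V // IsPolymer G γ ∧ γ.card = k ∧ v ∈ γ} : ℝ) ≤ exp (c * k))
    (hdeg : ∀ x, (G.degree x : ℝ) ≤ D)
    (hw : ∀ γ : Finset V, IsPolymer G γ → ‖w γ‖ ≤ η * exp (-(2 + c) * γ.card))
    (hη : 0 ≤ η) (hδ : 0 ≤ δ) (hδD : δ * (1 + D) ≤ 1) (S : Finset V) (v : V) :
    ∑ γ ∈ polymersThrough G S v, ‖w γ‖ * exp (δ * #(closedNbhd G γ)) ≤ η := by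
  set P := polymersThrough G S v
  have hsizes : ∀ k ∈ P.image card, 1 ≤ k := by
    simp only [mem_image]
    rintro k ⟨γ, hγ, rfl⟩
    exact card_pos.2 (mem_polymersThrough.1 hγ).2.1.1
  calc ∑ γ ∈ P, ‖w γ‖ * exp (δ * #(closedNbhd G γ))
      ≤ ∑ γ ∈ P, η * exp (-(1 + c) * #γ) := sum_le_sum fun γ hγ =>
        norm_mul_exp_card_closedNbhd_le hdeg hw hδ hδD (mem_polymersThrough.1 hγ).2.1
    _ = ∑ k ∈ P.image card, #{γ ∈ P | #γ = k} • (η * exp (-(1 + c) * k)) :=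
        sum_comp (fun k : ℕ => η * exp (-(1 + c) * k)) card
    _ ≤ ∑ k ∈ P.image card, exp (c * k) * (η * exp (-(1 + c) * k)) := by
        gcongr with k hk
        rw [nsmul_eq_mul]
        gcongr
        exact card_polymersThrough_filter_card_eq_le hcount S v (hsizes k hk)
    _ = η * ∑ k ∈ P.image card, exp (-(k : ℝ)) := by
        rw [mul_sum]
        refine sum_congr rfl fun k _ => ?_
        rw [mul_left_comm, ← exp_add]
        ring_nf
    _ ≤ η := mul_le_of_le_one_right hη (sum_exp_neg_le_one hsizes)

end ActivityBound

lemma exists_exponent_and_threshold {ε D : ℝ} (hε : 0 < ε) (hD : 0 ≤ D) :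
    ∃ δ η : ℝ, 0 < η ∧ 0 ≤ δ ∧ δ ≤ ε ∧ δ * (1 + D) ≤ 1 ∧
      1 + η ≤ exp δ ∧ exp (-δ) ≤ 1 - η := by
  set δ := min ε (1 + D)⁻¹
  have hδ : 0 < δ := lt_min hε (by positivity)
  have hexp : exp (-δ) < 1 := Real.exp_lt_one_iff.2 (neg_lt_zero.2 hδ)
  refine ⟨δ, (1 - exp (-δ)) / 2, by linarith, hδ.le, min_le_left _ _, ?_, ?_, by linarith⟩
  · calc δ * (1 + D) ≤ (1 + D)⁻¹ * (1 + D) := by gcongr; exact min_le_right _ _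
      _ = 1 := inv_mul_cancel₀ (by positivity)
  · linarith [add_one_le_exp δ, add_one_le_exp (-δ)]

theorem stmt_11_general (c : ℝ) (ε : ℝ) (hε : 0 < ε) :
    ∃ η : ℝ, 0 < η ∧
      ∀ (V : Type) [Fintype V] [DecidableEq V] (G : SimpleGraph V),
        (∀ v : V, ∀ k : ℕ, 1 ≤ k →
          (Nat.card {γ : Finset V // IsPolymer G γ ∧ γ.card = k ∧ v ∈ γ} : ℝ) ≤
            Real.exp (c * k)) →
        ∀ w : Finset V → ℂ,
          (∀ γ : Finset V, IsPolymer G γ →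
            ‖w γ‖ ≤ η * Real.exp (-(2 + c) * γ.card)) →
          Xi G w ≠ 0 ∧
            ∀ Γ : Finset (Finset V), IsIndepFamily G Γ →
              Real.exp (-ε * (traceFam Γ).card) ≤
                  ‖Xi G (fun γ => if γ ∩ traceFam Γ = ∅ then w γ else 0) /
                    Xi G w‖ ∧
                ‖Xi G (fun γ => if γ ∩ traceFam Γ = ∅ then w γ else 0) /
                    Xi G w‖ ≤
                  Real.exp (ε * (traceFam Γ).card) := by
  obtain ⟨δ, η, hη, hδ, hδε, hδD, hη₁, hη₂⟩ :=
    exists_exponent_and_threshold hε (exp_pos (c * 2)).le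
  refine ⟨η, hη, fun V _ _ G hcount w hw => ?_⟩
  have hdeg : ∀ x, (G.degree x : ℝ) ≤ exp (c * 2) := fun x =>
    (Nat.cast_le.2 (degree_le_card_polymers G x)).trans (by simpa using hcount x 2 one_le_two)
  have hstep := norm_XiOn_sub_XiOn_erase_le hη₂
    (sum_polymersThrough_norm_mul_exp_le hcount hdeg hw hη.le hδ hδD)
  refine ⟨Xi_eq_XiOn_univ G w ▸ XiOn_ne_zero hstep (by linarith [exp_pos (-δ)]) univ,
    fun Γ _ => ?_⟩
  rw [Xi_restrict_eq_XiOn_sdiff, Xi_eq_XiOn_univ]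
  obtain ⟨hlow, hup⟩ := XiOn_sdiff_div_bounds hstep hη₁ hη₂ univ (traceFam Γ)
  have hT : δ * #(traceFam Γ) ≤ ε * #(traceFam Γ) := by gcongr
  exact ⟨(exp_le_exp.2 (by linarith)).trans hlow, hup.trans (exp_le_exp.2 hT)⟩

/-- cluster-expansion control of ratios of polymer partition functions.
For every `c > 0` and `ε > 0` there is `η > 0`, depending only on `ε` and `c`, such that:
for any finite graph `G` whose number of connected subsets of cardinality `k` containing a
fixed vertex is at most `e^{ck}`, and any activity function `w` with
`|w(γ)| ≤ η e^{-(2+c)|γ|}` on polymers, one has `Ξ(w) ≠ 0` and, for every independent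
family `{γ̄}`, `e^{-ε|Tr({γ̄})|} ≤ |Ξ(w^{{γ̄}})/Ξ(w)| ≤ e^{ε|Tr({γ̄})|}`. -/
theorem stmt_11 (c : ℝ) (hc : 0 < c) (ε : ℝ) (hε : 0 < ε) :
    ∃ η : ℝ, 0 < η ∧
      ∀ (V : Type) [Fintype V] [DecidableEq V] (G : SimpleGraph V),
        (∀ v : V, ∀ k : ℕ, 1 ≤ k →
          (Nat.card {γ : Finset V // IsPolymer G γ ∧ γ.card = k ∧ v ∈ γ} : ℝ) ≤
            Real.exp (c * k)) →
        ∀ w : Finset V → ℂ,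
          (∀ γ : Finset V, IsPolymer G γ →
            ‖w γ‖ ≤ η * Real.exp (-(2 + c) * γ.card)) →
          Xi G w ≠ 0 ∧
            ∀ Γ : Finset (Finset V), IsIndepFamily G Γ →
              Real.exp (-ε * (traceFam Γ).card) ≤
                  ‖Xi G (fun γ => if γ ∩ traceFam Γ = ∅ then w γ else 0) /
                    Xi G w‖ ∧
                ‖Xi G (fun γ => if γ ∩ traceFam Γ = ∅ then w γ else 0) /
                    Xi G w‖ ≤
                  Real.exp (ε * (traceFam Γ).card) :=
  stmt_11_general c ε hε
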